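/- arXiv:2411.19501 — 5 statements merged into one kernel-verified Lean document; each statement's English description precedes it below -/
import Mathlib

section
/- Let α be a Frenet curve in H³ with curvature κ and torsion τ, let a ∈ ℝ⁴ with ⟨a,a⟩ = ε ∈ {−1,0,1} and let σ ≠ 0. If α is contained in U_{a,σ} (i.e. ⟨α(s),a⟩ = σ for all s ∈ I) and τ(s) ≠ 0 for all s ∈ I, then for all s ∈ I: 1/κ(s)² + κ′(s)²/(κ(s)⁴τ(s)²) = (ε + σ²)/σ² (which equals 1/H² for the mean curvature H = σ/√(ε+σ²) of U_{a,σ}). -/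
noncomputable section

/-- The Lorentzian bilinear form `⟨x,y⟩ = x₁y₁ + x₂y₂ + x₃y₃ − x₄y₄` on `ℝ⁴`. -/
def lprod (x y : Fin 4 → ℝ) : ℝ :=
  x 0 * y 0 + x 1 * y 1 + x 2 * y 2 - x 3 * y 3

/-- A Frenet curve in the hyperquadric model
`H³ = {p ∈ ℝ⁴ : ⟨p,p⟩ = −1, x₄ > 0}` of hyperbolic 3-space:
a `C⁴` unit-speed curve `α : I → H³` on an open interval `I`, together with a
Frenet frame `T, N, B`, a positive `C²` curvature `κ` and a `C¹` torsion `τ`,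
such that `T(s), N(s), B(s), α(s)` is an orthonormal basis of `(ℝ⁴, ⟨,⟩)` for
each `s ∈ I` and the Frenet equations `T′ = κN + α`, `N′ = −κT + τB`,
`B′ = −τN` hold on `I`. -/
structure FrenetCurveH3 where
  I : Set ℝ
  hopen : IsOpen I
  hconn : I.OrdConnected
  α : ℝ → Fin 4 → ℝ
  T : ℝ → Fin 4 → ℝ
  N : ℝ → Fin 4 → ℝ
  B : ℝ → Fin 4 → ℝ
  κ : ℝ → ℝ
  τ : ℝ → ℝ
  hα_smooth : ContDiffOn ℝ 4 α I
  hκ_smooth : ContDiffOn ℝ 2 κ I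
  hτ_smooth : ContDiffOn ℝ 1 τ I
  hκ_pos : ∀ s ∈ I, 0 < κ s
  h_hyperquadric : ∀ s ∈ I, lprod (α s) (α s) = -1
  h_x4 : ∀ s ∈ I, 0 < α s 3
  hT : ∀ s ∈ I, HasDerivAt α (T s) s
  hTT : ∀ s ∈ I, lprod (T s) (T s) = 1
  hNN : ∀ s ∈ I, lprod (N s) (N s) = 1
  hBB : ∀ s ∈ I, lprod (B s) (B s) = 1
  hTN : ∀ s ∈ I, lprod (T s) (N s) = 0
  hTB : ∀ s ∈ I, lprod (T s) (B s) = 0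
  hNB : ∀ s ∈ I, lprod (N s) (B s) = 0
  hTα : ∀ s ∈ I, lprod (T s) (α s) = 0
  hNα : ∀ s ∈ I, lprod (N s) (α s) = 0
  hBα : ∀ s ∈ I, lprod (B s) (α s) = 0
  hbasis : ∀ s ∈ I, ∀ v : Fin 4 → ℝ,
    lprod v v =
      lprod v (T s) ^ 2 + lprod v (N s) ^ 2 + lprod v (B s) ^ 2 - lprod v (α s) ^ 2
  hFrenetT : ∀ s ∈ I, HasDerivAt T (κ s • N s + α s) s
  hFrenetN : ∀ s ∈ I, HasDerivAt N ((-κ s) • T s + τ s • B s) s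
  hFrenetB : ∀ s ∈ I, HasDerivAt B ((-τ s) • N s) s

private lemma lprod_comm (x y : Fin 4 → ℝ) : lprod x y = lprod y x := by
  simp only [lprod]; ring

private lemma lprod_smul_add (c d : ℝ) (x y a : Fin 4 → ℝ) :
    lprod (c • x + d • y) a = c * lprod x a + d * lprod y a := by
  simp only [lprod, Pi.add_apply, Pi.smul_apply, smul_eq_mul]; ring

private lemma lprod_add (x y a : Fin 4 → ℝ) :
    lprod (x + y) a = lprod x a + lprod y a := by
  simp only [lprod, Pi.add_apply]; ring

private lemma lprod_smul (c : ℝ) (x a : Fin 4 → ℝ) :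
    lprod (c • x) a = c * lprod x a := by
  simp only [lprod, Pi.smul_apply, smul_eq_mul]; ring

private lemma hasDerivAt_lprod {f : ℝ → Fin 4 → ℝ} {f' : Fin 4 → ℝ} (a : Fin 4 → ℝ) {s : ℝ}
    (hf : HasDerivAt f f' s) :
    HasDerivAt (fun t => lprod (f t) a) (lprod f' a) s := by
  have h : ∀ i, HasDerivAt (fun t => f t i) (f' i) s := fun i => hasDerivAt_pi.mp hf i
  have := ((((h 0).mul_const (a 0)).add ((h 1).mul_const (a 1))).add
    ((h 2).mul_const (a 2))).sub ((h 3).mul_const (a 3))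
  simp only [lprod]; exact this


/-- If a Frenet curve `α` in `H³` with nowhere vanishing torsion is contained in
a totally umbilical surface `U_{a,σ}` with `σ ≠ 0` and `⟨a,a⟩ = ε ∈ {−1,0,1}`,
then `1/κ² + κ′²/(κ⁴τ²) = (ε + σ²)/σ²` (which is `1/H²` for the mean
curvature `H = σ/√(ε+σ²)` of `U_{a,σ}`). -/
theorem spherelike_equation_of_contained_in_umbilical_H3
    (F : FrenetCurveH3) (a : Fin 4 → ℝ) (ε σ : ℝ)
    (hε : ε = -1 ∨ ε = 0 ∨ ε = 1) (haa : lprod a a = ε) (hσ : σ ≠ 0)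
    (hcontained : ∀ s ∈ F.I, lprod (F.α s) a = σ)
    (hτ : ∀ s ∈ F.I, F.τ s ≠ 0) :
    ∀ s ∈ F.I,
      1 / F.κ s ^ 2 + (deriv F.κ s) ^ 2 / (F.κ s ^ 4 * F.τ s ^ 2)
        = (ε + σ ^ 2) / σ ^ 2 := by
  intro s hs
  have hκpos := F.hκ_pos s hs
  have hκ0 : F.κ s ≠ 0 := ne_of_gt hκpos
  have hτ0 := hτ s hs
  -- Step 1: ⟨T,a⟩ = 0 on I
  have hTa : ∀ t ∈ F.I, lprod (F.T t) a = 0 := by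
    intro t ht
    have h1 : HasDerivAt (fun u => lprod (F.α u) a) (lprod (F.T t) a) t :=
      hasDerivAt_lprod a (F.hT t ht)
    have heq : (fun u => lprod (F.α u) a) =ᶠ[nhds t] fun _ => σ :=
      Filter.eventually_of_mem (F.hopen.mem_nhds ht) (fun u hu => hcontained u hu)
    have h2 : HasDerivAt (fun u => lprod (F.α u) a) 0 t :=
      (hasDerivAt_const t σ).congr_of_eventuallyEq heq
    exact h1.unique h2
  -- Step 2: ⟨N,a⟩ = -σ/κ on I
  have hNa : ∀ t ∈ F.I, lprod (F.N t) a = -σ / F.κ t := by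
    intro t ht
    have h1 : HasDerivAt (fun u => lprod (F.T u) a)
        (lprod (F.κ t • F.N t + F.α t) a) t :=
      hasDerivAt_lprod a (F.hFrenetT t ht)
    have heq : (fun u => lprod (F.T u) a) =ᶠ[nhds t] fun _ => (0 : ℝ) :=
      Filter.eventually_of_mem (F.hopen.mem_nhds ht) (fun u hu => hTa u hu)
    have h2 : HasDerivAt (fun u => lprod (F.T u) a) 0 t :=
      (hasDerivAt_const t (0 : ℝ)).congr_of_eventuallyEq heq
    have h3 : lprod (F.κ t • F.N t + F.α t) a = 0 := h1.unique h2
    rw [lprod_add, lprod_smul, hcontained t ht] at h3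
    have hκt : F.κ t ≠ 0 := ne_of_gt (F.hκ_pos t ht)
    field_simp
    linarith
  -- Step 3: τ⟨B,a⟩ = σκ'/κ² at s
  have hκd : HasDerivAt F.κ (deriv F.κ s) s := by
    have h1 : ContDiffAt ℝ 2 F.κ s := F.hκ_smooth.contDiffAt (F.hopen.mem_nhds hs)
    exact (h1.differentiableAt (by norm_num)).hasDerivAt
  have h1 : HasDerivAt (fun u => lprod (F.N u) a)
      (lprod ((-F.κ s) • F.T s + F.τ s • F.B s) a) s :=
    hasDerivAt_lprod a (F.hFrenetN s hs)
  have h2 : HasDerivAt (fun u => -σ / F.κ u)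
      ((0 * F.κ s - -σ * deriv F.κ s) / F.κ s ^ 2) s :=
    (hasDerivAt_const s (-σ)).div hκd hκ0
  have heq : (fun u => lprod (F.N u) a) =ᶠ[nhds s] fun u => -σ / F.κ u :=
    Filter.eventually_of_mem (F.hopen.mem_nhds hs) (fun u hu => hNa u hu)
  have h2' : HasDerivAt (fun u => lprod (F.N u) a)
      ((0 * F.κ s - -σ * deriv F.κ s) / F.κ s ^ 2) s :=
    h2.congr_of_eventuallyEq heq
  have h3 : lprod ((-F.κ s) • F.T s + F.τ s • F.B s) a
      = (0 * F.κ s - -σ * deriv F.κ s) / F.κ s ^ 2 := h1.unique h2'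
  rw [lprod_smul_add, hTa s hs] at h3
  have hb : F.τ s * lprod (F.B s) a = σ * deriv F.κ s / F.κ s ^ 2 := by
    rw [mul_zero, zero_add] at h3; rw [h3]; ring
  -- Step 4: basis identity for a
  have hba := F.hbasis s hs a
  rw [haa, lprod_comm a (F.T s), lprod_comm a (F.N s), lprod_comm a (F.B s),
    lprod_comm a (F.α s), hTa s hs, hNa s hs, hcontained s hs] at hba
  set b := lprod (F.B s) a with hbdef
  -- derive deriv κ
  have hd : deriv F.κ s = F.τ s * b * F.κ s ^ 2 / σ := by
    field_simp at hb ⊢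
    linarith [hb]
  rw [hd]
  have hε2 : ε = (-σ / F.κ s) ^ 2 + b ^ 2 - σ ^ 2 := by
    rw [hba]; ring
  rw [hε2]
  field_simp
  ring
end
end

section
/- Let α be a Frenet curve in H³ with curvature κ and torsion τ such that τ(s) ≠ 0 and κ′(s) ≠ 0 for all s ∈ I. If there are a ∈ ℝ⁴ with ⟨a,a⟩ = ε ∈ {−1,0,1} and σ ≠ 0 such that ⟨α(s),a⟩ = σ for all s ∈ I (so α lies in a totally umbilical, non totally geodesic, surface of H³), then for all s ∈ I: τ(s)/κ(s) − d/ds [ κ′(s)/(κ(s)²τ(s)) ] = 0. -/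
noncomputable section

private lemma lprod_hasDerivAt {f : ℝ → Fin 4 → ℝ} {f' : Fin 4 → ℝ} {s : ℝ}
    (h : HasDerivAt f f' s) (a : Fin 4 → ℝ) :
    HasDerivAt (fun u => lprod (f u) a) (lprod f' a) s := by
  have hp := hasDerivAt_pi.mp h
  have := ((((hp 0).mul_const (a 0)).add ((hp 1).mul_const (a 1))).add
      ((hp 2).mul_const (a 2))).sub ((hp 3).mul_const (a 3))
  exact this

/-- If a Frenet curve `α` in `H³` with `τ ≠ 0` and `κ′ ≠ 0` is contained in a
totally umbilical, non totally geodesic, surface `U_{a,σ}` (`σ ≠ 0`,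
`⟨a,a⟩ = ε ∈ {−1,0,1}`), then `τ/κ − (κ′/(κ²τ))′ = 0` on `I`. -/
theorem fourth_order_equation_of_contained_in_umbilical_H3
    (F : FrenetCurveH3) (a : Fin 4 → ℝ) (ε σ : ℝ)
    (hε : ε = -1 ∨ ε = 0 ∨ ε = 1) (haa : lprod a a = ε) (hσ : σ ≠ 0)
    (hcontained : ∀ s ∈ F.I, lprod (F.α s) a = σ)
    (hτ : ∀ s ∈ F.I, F.τ s ≠ 0) (hκ' : ∀ s ∈ F.I, deriv F.κ s ≠ 0) :
    ∀ s ∈ F.I,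
      F.τ s / F.κ s
        - deriv (fun u => deriv F.κ u / (F.κ u ^ 2 * F.τ u)) s = 0 := by
  intro s hs
  -- basic setup
  have hmem : ∀ᶠ u in nhds s, u ∈ F.I := F.hopen.eventually_mem hs
  have hκpos := F.hκ_pos s hs
  have hκne : F.κ s ≠ 0 := ne_of_gt hκpos
  have hτs := hτ s hs
  -- κ is differentiable on I
  have hκder : ∀ u ∈ F.I, HasDerivAt F.κ (deriv F.κ u) u := by
    intro u hu
    exact ((F.hκ_smooth.differentiableOn (by norm_num)).differentiableAt
      (F.hopen.mem_nhds hu)).hasDerivAt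
  -- Step 1 : ⟨T,a⟩ = 0 on I
  have hTa : ∀ u ∈ F.I, lprod (F.T u) a = 0 := by
    intro u hu
    have h1 : HasDerivAt (fun v => lprod (F.α v) a) (lprod (F.T u) a) u :=
      lprod_hasDerivAt (F.hT u hu) a
    have h2 : HasDerivAt (fun v => lprod (F.α v) a) 0 u := by
      refine (hasDerivAt_const u σ).congr_of_eventuallyEq ?_
      filter_upwards [F.hopen.eventually_mem hu] with v hv using hcontained v hv
    exact h1.unique h2
  -- Step 2 : ⟨N,a⟩ = -σ/κ on I
  have hNa : ∀ u ∈ F.I, lprod (F.N u) a = -σ / F.κ u := by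
    intro u hu
    have h1 : HasDerivAt (fun v => lprod (F.T v) a)
        (lprod (F.κ u • F.N u + F.α u) a) u := lprod_hasDerivAt (F.hFrenetT u hu) a
    have h2 : HasDerivAt (fun v => lprod (F.T v) a) 0 u := by
      refine (hasDerivAt_const u (0:ℝ)).congr_of_eventuallyEq ?_
      filter_upwards [F.hopen.eventually_mem hu] with v hv using hTa v hv
    have h3 : lprod (F.κ u • F.N u + F.α u) a = 0 := h1.unique h2
    have h4 : F.κ u * lprod (F.N u) a + σ = 0 := by
      have hc := hcontained u hu
      simp only [lprod, Pi.add_apply, Pi.smul_apply, smul_eq_mul] at h3 hc ⊢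
      linarith [h3]
    have := ne_of_gt (F.hκ_pos u hu)
    field_simp
    linarith
  -- Step 3 : ⟨B,a⟩ = σ·κ'/(κ²τ) on I
  have hBa : ∀ u ∈ F.I, lprod (F.B u) a = σ * (deriv F.κ u / (F.κ u ^ 2 * F.τ u)) := by
    intro u hu
    have hκu := ne_of_gt (F.hκ_pos u hu)
    have h1 : HasDerivAt (fun v => lprod (F.N v) a)
        (lprod ((-F.κ u) • F.T u + F.τ u • F.B u) a) u :=
      lprod_hasDerivAt (F.hFrenetN u hu) a
    have h2 : HasDerivAt (fun v => -σ / F.κ v)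
        (σ * deriv F.κ u / F.κ u ^ 2) u := by
      have := (hasDerivAt_const u (-σ)).div (hκder u hu) hκu
      rw [show σ * deriv F.κ u / F.κ u ^ 2 = (0 * F.κ u - (-σ) * deriv F.κ u) / F.κ u ^ 2 by ring]
      exact this
    have h3 : HasDerivAt (fun v => lprod (F.N v) a)
        (σ * deriv F.κ u / F.κ u ^ 2) u := by
      refine h2.congr_of_eventuallyEq ?_
      filter_upwards [F.hopen.eventually_mem hu] with v hv using hNa v hv
    have h4 : lprod ((-F.κ u) • F.T u + F.τ u • F.B u) a
        = σ * deriv F.κ u / F.κ u ^ 2 := h1.unique h3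
    have h5 : F.τ u * lprod (F.B u) a = σ * deriv F.κ u / F.κ u ^ 2 := by
      have hT0 := hTa u hu
      simp only [lprod, Pi.add_apply, Pi.smul_apply, smul_eq_mul] at h4 hT0 ⊢
      linear_combination h4 + F.κ u * hT0
    have hτu := hτ u hu
    field_simp at h5 ⊢
    linarith
  -- Step 4 : differentiate ⟨B,a⟩
  have h1 : HasDerivAt (fun v => lprod (F.B v) a)
      (lprod ((-F.τ s) • F.N s) a) s := lprod_hasDerivAt (F.hFrenetB s hs) a
  have h1' : HasDerivAt (fun v => lprod (F.B v) a) (σ * (F.τ s / F.κ s)) s := by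
    convert h1 using 1
    have := hNa s hs
    simp only [lprod, Pi.smul_apply, smul_eq_mul] at this ⊢
    field_simp at this
    rw [mul_div_assoc', div_eq_iff hκne]
    linear_combination F.τ s * this
  have hg : HasDerivAt (fun v => σ * (deriv F.κ v / (F.κ v ^ 2 * F.τ v)))
      (σ * (F.τ s / F.κ s)) s := by
    refine h1'.congr_of_eventuallyEq ?_
    filter_upwards [hmem] with v hv using (hBa v hv).symm
  have hf : HasDerivAt (fun v => deriv F.κ v / (F.κ v ^ 2 * F.τ v)) (F.τ s / F.κ s) s := by
    have := hg.const_mul σ⁻¹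
    have heq : (fun v => σ⁻¹ * (σ * (deriv F.κ v / (F.κ v ^ 2 * F.τ v))))
        = fun v => deriv F.κ v / (F.κ v ^ 2 * F.τ v) := by
      funext v; field_simp
    rw [heq] at this
    rw [← mul_assoc, inv_mul_cancel₀ hσ, one_mul] at this
    exact this
  rw [hf.deriv]
  ring
end
end

section
/- Let c ∈ {−1,1} and let α be an RM-framed unit-speed curve in the space form M^{n+1}(c) with frame N₁,…,N_n and curvatures κ₁,…,κ_n. If there are a ∈ ℝ^{n+2}, a ≠ 0, and σ ∈ ℝ with ⟨α(s),a⟩ = σ for all s ∈ I (α is contained in the totally umbilical hypersurface U_{a,σ}), then each function s ↦ ⟨N_i(s),a⟩ is constant, and with a_i := ⟨N_i,a⟩ the linear relation Σ_{i=1}^n a_i κ_i(s) − cσ = 0 holds for all s ∈ I. -/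
noncomputable section

/-- The bilinear form `⟨x,y⟩ = Σ_{i=1}^{n+1} xᵢyᵢ + c·x_{n+2}y_{n+2}` on
`ℝ^{n+2}`, whose hyperquadric `{⟨p,p⟩ = c}` is the space form `M^{n+1}(c)`
for `c ∈ {−1,1}`. -/
def sprod (n : ℕ) (c : ℝ) (x y : Fin (n + 2) → ℝ) : ℝ :=
  (∑ i : Fin (n + 1), x i.castSucc * y i.castSucc)
    + c * x (Fin.last (n + 1)) * y (Fin.last (n + 1))

/-- An RM-framed (rotation minimizing framed) unit-speed curve in the space
form `M^{n+1}(c) = {p ∈ ℝ^{n+2} : ⟨p,p⟩ = c}`, `c ∈ {−1,1}` (with last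
coordinate positive when `c = −1`): a `C²` curve `α : I → M^{n+1}(c)` on an
open interval `I` with unit tangent `T = α′`, together with normal fields
`N₁, …, N_n` and continuous curvatures `κ₁, …, κ_n` such that
`T(s), N₁(s), …, N_n(s), α(s)` are orthonormal with respect to `⟨,⟩` and the
RM equations `T′ = Σ κᵢ Nᵢ − cα`, `Nᵢ′ = −κᵢ T` hold on `I`. -/
structure RMCurve (n : ℕ) (c : ℝ) where
  hc : c = -1 ∨ c = 1
  I : Set ℝ
  hopen : IsOpen I
  hconn : I.OrdConnected
  α : ℝ → Fin (n + 2) → ℝ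
  T : ℝ → Fin (n + 2) → ℝ
  N : Fin n → ℝ → Fin (n + 2) → ℝ
  κ : Fin n → ℝ → ℝ
  hα_smooth : ContDiffOn ℝ 2 α I
  hκ_cont : ∀ i, ContinuousOn (κ i) I
  h_hyperquadric : ∀ s ∈ I, sprod n c (α s) (α s) = c
  h_last_pos : c = -1 → ∀ s ∈ I, 0 < α s (Fin.last (n + 1))
  hT : ∀ s ∈ I, HasDerivAt α (T s) s
  hTT : ∀ s ∈ I, sprod n c (T s) (T s) = 1
  hNN : ∀ i j, ∀ s ∈ I, sprod n c (N i s) (N j s) = if i = j then 1 else 0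
  hTN : ∀ i, ∀ s ∈ I, sprod n c (T s) (N i s) = 0
  hTα : ∀ s ∈ I, sprod n c (T s) (α s) = 0
  hNα : ∀ i, ∀ s ∈ I, sprod n c (N i s) (α s) = 0
  hRMT : ∀ s ∈ I, HasDerivAt T ((∑ i, κ i s • N i s) - c • α s) s
  hRMN : ∀ i, ∀ s ∈ I, HasDerivAt (N i) ((-(κ i s)) • T s) s


def sprodL (n : ℕ) (c : ℝ) (a : Fin (n + 2) → ℝ) : (Fin (n + 2) → ℝ) →L[ℝ] ℝ :=
  (∑ i : Fin (n + 1), a i.castSucc • ContinuousLinearMap.proj i.castSucc)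
    + (c * a (Fin.last (n + 1))) • ContinuousLinearMap.proj (Fin.last (n + 1))

lemma sprodL_apply (n : ℕ) (c : ℝ) (a x : Fin (n + 2) → ℝ) :
    sprodL n c a x = sprod n c x a := by
  simp only [sprodL, sprod, ContinuousLinearMap.add_apply, ContinuousLinearMap.sum_apply,
    ContinuousLinearMap.smul_apply, ContinuousLinearMap.proj_apply, smul_eq_mul]
  rw [Finset.sum_congr rfl (fun i _ => mul_comm (a i.castSucc) (x i.castSucc))]
  ring

lemma hasDerivAt_sprod {n : ℕ} {c : ℝ} {a : Fin (n + 2) → ℝ} {f : ℝ → Fin (n + 2) → ℝ}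
    {v : Fin (n + 2) → ℝ} {s : ℝ} (hf : HasDerivAt f v s) :
    HasDerivAt (fun t => sprod n c (f t) a) (sprod n c v a) s := by
  have := (sprodL n c a).hasFDerivAt.comp_hasDerivAt s hf
  simp only [Function.comp_def, sprodL_apply] at this; exact this

/-- If an RM-framed unit-speed curve `α` in the space form `M^{n+1}(c)`,
`c ∈ {−1,1}`, is contained in a totally umbilical hypersurface `U_{a,σ}`
(`a ≠ 0`), then each function `s ↦ ⟨Nᵢ(s),a⟩` is a constant `aᵢ`, and the
linear relation `Σᵢ aᵢ κᵢ(s) − cσ = 0` holds on `I`. -/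
theorem linear_relation_of_contained_in_umbilical_hypersurface
    (n : ℕ) (hn : 1 ≤ n) (c : ℝ) (F : RMCurve n c)
    (a : Fin (n + 2) → ℝ) (ha : a ≠ 0) (σ : ℝ)
    (hcontained : ∀ s ∈ F.I, sprod n c (F.α s) a = σ) :
    ∃ av : Fin n → ℝ,
      (∀ i, ∀ s ∈ F.I, sprod n c (F.N i s) a = av i) ∧
      (∀ s ∈ F.I, (∑ i, av i * F.κ i s) - c * σ = 0) := by
  classical
  have hconv : Convex ℝ F.I := convex_iff_ordConnected.mpr F.hconn
  -- ⟨T s, a⟩ = 0 on I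
  have hTa : ∀ s ∈ F.I, sprod n c (F.T s) a = 0 := by
    intro s hs
    have h1 : HasDerivAt (fun t => sprod n c (F.α t) a) (sprod n c (F.T s) a) s :=
      hasDerivAt_sprod (F.hT s hs)
    have heq : (fun _ : ℝ => σ) =ᶠ[nhds s] fun t => sprod n c (F.α t) a :=
      Filter.eventuallyEq_of_mem (F.hopen.mem_nhds hs) (fun t ht => (hcontained t ht).symm)
    have h2 : HasDerivAt (fun t => sprod n c (F.α t) a) 0 s :=
      (hasDerivAt_const s σ).congr_of_eventuallyEq heq.symm
    exact h1.unique h2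
  -- each ⟨Nᵢ s, a⟩ has zero derivative on I
  have hNderiv : ∀ i, ∀ s ∈ F.I, HasDerivAt (fun t => sprod n c (F.N i t) a) 0 s := by
    intro i s hs
    have h1 := hasDerivAt_sprod (c := c) (a := a) (F.hRMN i s hs)
    have h2 : sprod n c ((-(F.κ i s)) • F.T s) a = 0 := by
      rw [← sprodL_apply, map_smul, smul_eq_mul, sprodL_apply, hTa s hs, mul_zero]
    rwa [h2] at h1
  by_cases hI : ∃ s₀, s₀ ∈ F.I
  · obtain ⟨s₀, hs₀⟩ := hI
    refine ⟨fun i => sprod n c (F.N i s₀) a, ?_, ?_⟩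
    · intro i s hs
      have hdiff : DifferentiableOn ℝ (fun t => sprod n c (F.N i t) a) F.I :=
        fun t ht => ((hNderiv i t ht).differentiableAt.differentiableWithinAt)
      refine hconv.is_const_of_fderivWithin_eq_zero hdiff (fun t ht => ?_) hs hs₀
      have : fderivWithin ℝ (fun u => sprod n c (F.N i u) a) F.I t
          = fderiv ℝ (fun u => sprod n c (F.N i u) a) t :=
        fderivWithin_of_isOpen F.hopen ht
      rw [this, (hNderiv i t ht).hasFDerivAt.fderiv]
      ext u
      simp
    · intro s hs
      -- derivative of t ↦ ⟨T t, a⟩ at s is 0 since the function vanishes on I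
      have h1 : HasDerivAt (fun t => sprod n c (F.T t) a)
          (sprod n c ((∑ i, F.κ i s • F.N i s) - c • F.α s) a) s :=
        hasDerivAt_sprod (F.hRMT s hs)
      have heq : (fun _ : ℝ => (0 : ℝ)) =ᶠ[nhds s] fun t => sprod n c (F.T t) a :=
        Filter.eventuallyEq_of_mem (F.hopen.mem_nhds hs) (fun t ht => (hTa t ht).symm)
      have h2 : HasDerivAt (fun t => sprod n c (F.T t) a) 0 s :=
        (hasDerivAt_const s (0 : ℝ)).congr_of_eventuallyEq heq.symm
      have h0 : sprod n c ((∑ i, F.κ i s • F.N i s) - c • F.α s) a = 0 := h1.unique h2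
      have hNconst : ∀ i, sprod n c (F.N i s) a = sprod n c (F.N i s₀) a := by
        intro i
        have hdiff : DifferentiableOn ℝ (fun t => sprod n c (F.N i t) a) F.I :=
          fun t ht => ((hNderiv i t ht).differentiableAt.differentiableWithinAt)
        refine hconv.is_const_of_fderivWithin_eq_zero hdiff (fun t ht => ?_) hs hs₀
        have : fderivWithin ℝ (fun u => sprod n c (F.N i u) a) F.I t
            = fderiv ℝ (fun u => sprod n c (F.N i u) a) t :=
          fderivWithin_of_isOpen F.hopen ht
        rw [this, (hNderiv i t ht).hasFDerivAt.fderiv]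
        ext u
        simp
      have hexpand : sprod n c ((∑ i, F.κ i s • F.N i s) - c • F.α s) a
          = (∑ i, F.κ i s * sprod n c (F.N i s) a) - c * σ := by
        rw [← sprodL_apply, map_sub, map_sum, map_smul]
        simp only [smul_eq_mul, sprodL_apply]
        congr 1
        · exact Finset.sum_congr rfl (fun i _ => by rw [← sprodL_apply, map_smul,
            smul_eq_mul, sprodL_apply])
        · rw [hcontained s hs]
      rw [hexpand] at h0
      rw [← h0]
      congr 1
      exact Finset.sum_congr rfl (fun i _ => by rw [hNconst i, mul_comm])
  · push_neg at hI
    exact ⟨fun _ => 0, fun i s hs => absurd hs (hI s), fun s hs => absurd hs (hI s)⟩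
end
end

section
/- Let c ∈ {−1,1} and let α be an RM-framed unit-speed curve in the space form M^{n+1}(c) with frame N₁,…,N_n and curvatures κ₁,…,κ_n. Suppose there are real constants a₁,…,a_n, σ, not all zero, such that Σ_{i=1}^n a_i κ_i(s) + σ = 0 for all s ∈ I. Then the map s ↦ Σ_{i=1}^n a_i N_i(s) − σ α(s) is constant, equal to some a ∈ ℝ^{n+2} with a ≠ 0, and ⟨α(s),a⟩ = −cσ for all s ∈ I; that is, α is contained in the totally umbilical hypersurface U_{a,−cσ} of M^{n+1}(c). -/
noncomputable section

lemma sprod_comm (n : ℕ) (c : ℝ) (x y : Fin (n + 2) → ℝ) :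
    sprod n c x y = sprod n c y x := by
  unfold sprod
  congr 1
  · exact Finset.sum_congr rfl fun i _ => mul_comm _ _
  · ring

lemma sprod_smul_right (n : ℕ) (c : ℝ) (r : ℝ) (x y : Fin (n + 2) → ℝ) :
    sprod n c x (r • y) = r * sprod n c x y := by
  unfold sprod
  rw [mul_add, Finset.mul_sum]
  congr 1
  · exact Finset.sum_congr rfl fun i _ => by simp; ring
  · simp; ring

lemma sprod_sub_right (n : ℕ) (c : ℝ) (x y z : Fin (n + 2) → ℝ) :
    sprod n c x (y - z) = sprod n c x y - sprod n c x z := by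
  unfold sprod
  simp [mul_sub, Finset.sum_sub_distrib]
  ring

lemma sprod_sum_right (n : ℕ) (c : ℝ) (x : Fin (n + 2) → ℝ)
    {m : ℕ} (f : Fin m → Fin (n + 2) → ℝ) :
    sprod n c x (∑ i, f i) = ∑ i, sprod n c x (f i) := by
  unfold sprod
  rw [Finset.sum_add_distrib]
  congr 1
  · simp only [Finset.sum_apply, Finset.mul_sum]
    exact Finset.sum_comm
  · simp [Finset.sum_apply, Finset.mul_sum, mul_assoc]

lemma sprod_comb (n : ℕ) (c : ℝ) (x : Fin (n + 2) → ℝ) {m : ℕ}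
    (av : Fin m → ℝ) (f : Fin m → Fin (n + 2) → ℝ) (σ : ℝ) (g : Fin (n + 2) → ℝ) :
    sprod n c x ((∑ i, av i • f i) - σ • g)
      = (∑ i, av i * sprod n c x (f i)) - σ * sprod n c x g := by
  rw [sprod_sub_right, sprod_sum_right, sprod_smul_right]
  congr 1
  exact Finset.sum_congr rfl fun i _ => sprod_smul_right n c (av i) x (f i)

/-- If along an RM-framed unit-speed curve `α` in the space form `M^{n+1}(c)`,
`c ∈ {−1,1}`, there are constants `a₁, …, a_n, σ`, not all zero, with
`Σᵢ aᵢ κᵢ(s) + σ = 0` on `I`, then `s ↦ Σᵢ aᵢ Nᵢ(s) − σ α(s)` is a constant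
nonzero vector `a` and `⟨α(s),a⟩ = −cσ` for all `s ∈ I`; that is, `α` is
contained in the totally umbilical hypersurface `U_{a,−cσ}`. -/
theorem contained_in_umbilical_hypersurface_of_linear_relation
    (n : ℕ) (hn : 1 ≤ n) (c : ℝ) (F : RMCurve n c)
    (av : Fin n → ℝ) (σ : ℝ) (hnz : av ≠ 0 ∨ σ ≠ 0)
    (hrel : ∀ s ∈ F.I, (∑ i, av i * F.κ i s) + σ = 0) :
    ∃ a : Fin (n + 2) → ℝ, a ≠ 0 ∧
      (∀ s ∈ F.I, (∑ i, av i • F.N i s) - σ • F.α s = a) ∧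
      (∀ s ∈ F.I, sprod n c (F.α s) a = -(c * σ)) := by
  have hc0 : c ≠ 0 := by rcases F.hc with h | h <;> rw [h] <;> norm_num
  rcases Set.eq_empty_or_nonempty F.I with hI | ⟨s₀, hs₀⟩
  · refine ⟨fun _ => 1, ?_, ?_, ?_⟩
    · intro h
      have := congrFun h 0
      simp at this
    · intro s hs; rw [hI] at hs; exact absurd hs (Set.notMem_empty s)
    · intro s hs; rw [hI] at hs; exact absurd hs (Set.notMem_empty s)
  set J : ℝ → Fin (n + 2) → ℝ := fun s => (∑ i, av i • F.N i s) - σ • F.α s with hJdef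
  -- J has derivative 0 on I
  have hJderiv : ∀ s ∈ F.I, HasDerivAt J 0 s := by
    intro s hs
    have h1 : HasDerivAt J ((∑ i, av i • ((-(F.κ i s)) • F.T s)) - σ • F.T s) s := by
      apply HasDerivAt.sub
      · exact HasDerivAt.fun_sum fun i _ => (F.hRMN i s hs).const_smul (av i)
      · exact (F.hT s hs).const_smul σ
    have h2 : (∑ i, av i • ((-(F.κ i s)) • F.T s)) - σ • F.T s = 0 := by
      have : (∑ i, av i • ((-(F.κ i s)) • F.T s)) - σ • F.T s
          = (-((∑ i, av i * F.κ i s) + σ)) • F.T s := by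
        simp only [smul_smul]
        rw [← Finset.sum_smul, ← sub_smul]
        congr 1
        simp only [mul_neg, Finset.sum_neg_distrib]
        ring
      rw [this, hrel s hs]
      simp
    rwa [h2] at h1
  have hconv : Convex ℝ F.I := convex_iff_ordConnected.mpr F.hconn
  -- J is constant
  have hconst : ∀ s ∈ F.I, J s = J s₀ := by
    intro s hs
    have key : ‖J s - J s₀‖ ≤ 0 * ‖s - s₀‖ := by
      apply hconv.norm_image_sub_le_of_norm_hasFDerivWithin_le
        (f' := fun _ => (1 : ℝ →L[ℝ] ℝ).smulRight (0 : Fin (n + 2) → ℝ))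
      · intro x hx
        exact (hJderiv x hx).hasFDerivAt.hasFDerivWithinAt
      · intro x _
        have : (1 : ℝ →L[ℝ] ℝ).smulRight (0 : Fin (n + 2) → ℝ) = 0 := by
          ext t; simp
        rw [this]; simp
      · exact hs₀
      · exact hs
    rw [zero_mul] at key
    have := le_antisymm key (norm_nonneg _)
    rwa [norm_eq_zero, sub_eq_zero] at this
  refine ⟨J s₀, ?_, hconst, ?_⟩
  · -- a ≠ 0
    intro ha0
    have hav : av = 0 := by
      funext i
      have h := sprod_comb n c (F.N i s₀) av (fun j => F.N j s₀) σ (F.α s₀)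
      rw [show ((∑ j, av j • F.N j s₀) - σ • F.α s₀) = J s₀ from rfl, ha0] at h
      simp only [F.hNα i s₀ hs₀, mul_zero, sub_zero] at h
      have hsum : (∑ j, av j * sprod n c (F.N i s₀) (F.N j s₀)) = av i := by
        rw [Finset.sum_eq_single i]
        · rw [F.hNN i i s₀ hs₀]; simp
        · intro j _ hj
          rw [F.hNN i j s₀ hs₀, if_neg (Ne.symm hj), mul_zero]
        · simp
      rw [hsum] at h
      have hz : sprod n c (F.N i s₀) (0 : Fin (n + 2) → ℝ) = 0 := by
        unfold sprod; simp
      rw [hz] at h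
      simp [← h]
    have hσ : σ = 0 := by
      have h := sprod_comb n c (F.α s₀) av (fun j => F.N j s₀) σ (F.α s₀)
      rw [show ((∑ j, av j • F.N j s₀) - σ • F.α s₀) = J s₀ from rfl, ha0] at h
      have hz : sprod n c (F.α s₀) (0 : Fin (n + 2) → ℝ) = 0 := by
        unfold sprod; simp
      rw [hz, F.h_hyperquadric s₀ hs₀] at h
      have hNα' : ∀ j, sprod n c (F.α s₀) (F.N j s₀) = 0 := fun j => by
        rw [sprod_comm]; exact F.hNα j s₀ hs₀
      simp only [hNα', mul_zero, Finset.sum_const_zero, zero_sub] at h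
      have : σ * c = 0 := by linarith
      rcases mul_eq_zero.mp this with h' | h'
      · exact h'
      · exact absurd h' hc0
    rcases hnz with h | h
    · exact h hav
    · exact h hσ
  · -- ⟨α s, a⟩ = -(cσ)
    intro s hs
    rw [← hconst s hs]
    have h := sprod_comb n c (F.α s) av (fun j => F.N j s) σ (F.α s)
    rw [show ((∑ j, av j • F.N j s) - σ • F.α s) = J s from rfl] at h
    have hNα' : ∀ j, sprod n c (F.α s) (F.N j s) = 0 := fun j => by
      rw [sprod_comm]; exact F.hNα j s hs
    rw [h, F.h_hyperquadric s hs]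
    simp only [hNα', mul_zero, Finset.sum_const_zero, zero_sub]
    ring
end
end

section
/- Let I ⊆ ℝ be an open interval, τ₀ ≠ 0 a real number, R > 0, and let w : I → ℝ be continuously differentiable with w′(s) ≠ 0 for all s ∈ I and τ₀² w(s)² + w′(s)² = τ₀² R² for all s ∈ I. Then there exists a₀ ∈ ℝ such that w(s) = R·sin(τ₀ s + a₀) for all s ∈ I. -/
/-- Let `I` be an open interval, `τ₀ ≠ 0`, `R > 0`, and let `w : I → ℝ` be
continuously differentiable with `w′ ≠ 0` on `I` and
`τ₀² w² + w′² = τ₀² R²` on `I`. Then `w(s) = R·sin(τ₀ s + a₀)` on `I` for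
some constant `a₀`. -/
theorem eq_sin_of_ode (I : Set ℝ) (hopen : IsOpen I) (hconn : I.OrdConnected)
    (τ₀ R : ℝ) (hτ₀ : τ₀ ≠ 0) (hR : 0 < R)
    (w : ℝ → ℝ) (hw : ContDiffOn ℝ 1 w I)
    (hw' : ∀ s ∈ I, deriv w s ≠ 0)
    (hode : ∀ s ∈ I, τ₀ ^ 2 * w s ^ 2 + (deriv w s) ^ 2 = τ₀ ^ 2 * R ^ 2) :
    ∃ a₀ : ℝ, ∀ s ∈ I, w s = R * Real.sin (τ₀ * s + a₀) := by
  rcases Set.eq_empty_or_nonempty I with hI | ⟨s₀, hs₀⟩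
  · exact ⟨0, fun s hs => absurd hs (hI ▸ Set.notMem_empty s)⟩
  have hconv : Convex ℝ I := hconn.convex
  have hτabs : (0:ℝ) < |τ₀| := abs_pos.mpr hτ₀
  -- w is differentiable at points of I
  have hwd : ∀ s ∈ I, HasDerivAt w (deriv w s) s := fun s hs =>
    ((hw.differentiableOn one_ne_zero).differentiableAt (hopen.mem_nhds hs)).hasDerivAt
  -- |w| < R on I
  have hlt : ∀ s ∈ I, w s ^ 2 < R ^ 2 := by
    intro s hs
    have h1 : (0:ℝ) < (deriv w s) ^ 2 := by
      have := hw' s hs; positivity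
    nlinarith [hode s hs, sq_nonneg τ₀, sq_nonneg (τ₀ * w s)]
  have habs : ∀ s ∈ I, |w s| < R := by
    intro s hs
    have h1 := hlt s hs
    have h2 : |w s| ^ 2 = w s ^ 2 := sq_abs _
    nlinarith [abs_nonneg (w s)]
  -- deriv w is continuous on I
  have hcont : ContinuousOn (deriv w) I := by
    have := hw.continuousOn_derivWithin hopen.uniqueDiffOn le_rfl
    exact this.congr fun s hs => (derivWithin_of_isOpen hopen hs).symm
  -- constant sign of deriv w
  have hsign : (∀ s ∈ I, 0 < deriv w s) ∨ (∀ s ∈ I, deriv w s < 0) := by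
    by_contra h
    push_neg at h
    obtain ⟨⟨s₁, hs₁, hle₁⟩, s₂, hs₂, hle₂⟩ := h
    have hneg : deriv w s₁ < 0 := lt_of_le_of_ne hle₁ (hw' s₁ hs₁)
    have hpos : 0 < deriv w s₂ := lt_of_le_of_ne hle₂ (Ne.symm (hw' s₂ hs₂))
    have hsub : Set.uIcc s₁ s₂ ⊆ I := hconn.uIcc_subset hs₁ hs₂
    have h0 : (0:ℝ) ∈ deriv w '' Set.uIcc s₁ s₂ := by
      apply intermediate_value_uIcc (hcont.mono hsub)
      rw [Set.mem_uIcc]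
      exact Or.inl ⟨hneg.le, hpos.le⟩
    obtain ⟨s, hsmem, hs0⟩ := h0
    exact hw' s (hsub hsmem) hs0
  -- key: sqrt (R^2 - w s^2) = |deriv w s| / |τ₀|
  have hsqrt : ∀ s ∈ I, Real.sqrt (R ^ 2 - w s ^ 2) = |deriv w s| / |τ₀| := by
    intro s hs
    have h1 : R ^ 2 - w s ^ 2 = (deriv w s / τ₀) ^ 2 := by
      field_simp
      nlinarith [hode s hs]
    rw [h1, Real.sqrt_sq_eq_abs, abs_div]
  -- the constant slope k, with k = |τ₀| or -|τ₀|
  obtain ⟨k, hk2, hval⟩ : ∃ k : ℝ, k ^ 2 = τ₀ ^ 2 ∧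
      ∀ s ∈ I, deriv w s / Real.sqrt (R ^ 2 - w s ^ 2) = k := by
    rcases hsign with hpos | hneg
    · refine ⟨|τ₀|, sq_abs τ₀, fun s hs => ?_⟩
      rw [hsqrt s hs, abs_of_pos (hpos s hs)]
      rw [div_div_eq_mul_div, mul_comm, mul_div_assoc, div_self (hw' s hs), mul_one]
    · refine ⟨-|τ₀|, by rw [neg_pow]; simp [sq_abs], fun s hs => ?_⟩
      rw [hsqrt s hs, abs_of_neg (hneg s hs)]
      have hne := hw' s hs
      rw [div_div_eq_mul_div, div_neg, mul_comm, mul_div_assoc, div_self hne, mul_one]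
  -- derivative of arcsin (w / R)
  have hkd : ∀ s ∈ I, HasDerivAt (fun t => Real.arcsin (w t / R)) k s := by
    intro s hs
    have hlt' := habs s hs
    have habs1 : |w s / R| < 1 := by
      rw [abs_div, abs_of_pos hR, div_lt_one hR]
      exact hlt'
    have h1 : w s / R ≠ -1 := by
      intro h; rw [h] at habs1; simp at habs1
    have h2 : w s / R ≠ 1 := by
      intro h; rw [h] at habs1; simp at habs1
    have hdiv : HasDerivAt (fun t => w t / R) (deriv w s / R) s := (hwd s hs).div_const R
    have hcomp := (Real.hasDerivAt_arcsin h1 h2).comp s hdiv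
    have heq : 1 / Real.sqrt (1 - (w s / R) ^ 2) * (deriv w s / R) = k := by
      have hs1 : 1 - (w s / R) ^ 2 = (R ^ 2 - w s ^ 2) / R ^ 2 := by field_simp
      have hsqpos : 0 < R ^ 2 - w s ^ 2 := by nlinarith [hlt s hs]
      rw [hs1, Real.sqrt_div hsqpos.le, Real.sqrt_sq hR.le, ← hval s hs]
      have hsp : 0 < Real.sqrt (R ^ 2 - w s ^ 2) := Real.sqrt_pos.mpr hsqpos
      field_simp
    rw [← heq]
    exact hcomp
  -- the function arcsin(w/R) - k*s is constant
  set F : ℝ → ℝ := fun t => Real.arcsin (w t / R) - k * t with hF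
  have hFd : ∀ s ∈ I, HasDerivAt F 0 s := by
    intro s hs
    have := (hkd s hs).sub ((hasDerivAt_id s).const_mul k)
    rw [mul_one, sub_self] at this
    exact this
  have hFconst : ∀ s ∈ I, F s = F s₀ := by
    intro s hs
    apply hconv.is_const_of_fderivWithin_eq_zero
      (fun t ht => ((hFd t ht).differentiableAt).differentiableWithinAt) _ hs hs₀
    intro t ht
    rw [fderivWithin_of_isOpen hopen ht]
    have h0 : HasFDerivAt F (0 : ℝ →L[ℝ] ℝ) t := by
      have h := (hFd t ht).hasFDerivAt
      have he : ContinuousLinearMap.toSpanSingleton ℝ (0 : ℝ) = 0 := by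
        ext; simp
      rwa [he] at h
    exact h0.fderiv
  -- hence arcsin(w s / R) = k * s + c
  set c : ℝ := Real.arcsin (w s₀ / R) - k * s₀ with hc
  have hsin : ∀ s ∈ I, w s = R * Real.sin (k * s + c) := by
    intro s hs
    have h1 : Real.arcsin (w s / R) = k * s + c := by
      have := hFconst s hs
      simp only [hF] at this
      rw [hc]; linarith
    have habs1 : |w s / R| < 1 := by
      rw [abs_div, abs_of_pos hR, div_lt_one hR]; exact habs s hs
    have h2 : Real.sin (Real.arcsin (w s / R)) = w s / R :=
      Real.sin_arcsin (abs_le.mp habs1.le).1 (abs_le.mp habs1.le).2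
    rw [h1] at h2
    field_simp at h2
    linarith [h2]
  -- k = τ₀ or k = -τ₀
  have hk : k = τ₀ ∨ k = -τ₀ := by
    have : (k - τ₀) * (k + τ₀) = 0 := by nlinarith
    rcases mul_eq_zero.mp this with h | h
    · left; linarith
    · right; linarith
  rcases hk with hk | hk
  · exact ⟨c, fun s hs => by rw [hsin s hs, hk]⟩
  · refine ⟨Real.pi - c, fun s hs => ?_⟩
    rw [hsin s hs, hk]
    congr 1
    have : τ₀ * s + (Real.pi - c) = Real.pi - (c - τ₀ * s) := by ring
    rw [this, Real.sin_pi_sub]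
    congr 1
    ring
end
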